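/- Soundness of guard translation, strict-upper case: if ν corresponds with (r, α, t) and ν(x_p) < e for e ∈ ℕ, then t ≤ e when ι(r,α) = LESS, and t < e otherwise (i.e., t satisfies the translated guard x̂_p ≤ e respectively x̂_p < e). -/
import Mathlib

inductive Iota | LESS | MORE | EXACT
deriving DecidableEq

/-- Soundness of the guard translation, strict-upper case: if `ν(x_p) < e`
then the translated guard holds for `t`, namely `t ≤ e` when `ι = LESS` and
`t < e` otherwise. -/
theorem guard_translation_sound_strict (ι : Iota) (t : ℕ) (νp : ℝ)
    (hfloor : ⌊νp⌋ + (if ι = .LESS then 1 else 0) = (t : ℤ))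
    (hnat : (∃ n : ℕ, νp = n) ↔ ι = .EXACT)
    (e : ℕ) (h : νp < e) :
    (ι = .LESS → t ≤ e) ∧ (ι ≠ .LESS → t < e) := by
  have hf : ⌊νp⌋ < (e : ℤ) := Int.floor_lt.mpr (by exact_mod_cast h)
  constructor
  · intro hι; simp [hι] at hfloor; omega
  · intro hι; simp [hι] at hfloor; omega
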